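/- Fix ρ ∈ ℝ and σ > 0. The expected improvement EI(μ) = (ρ − μ)·Φ((ρ − μ)/σ) + σ·φ((ρ − μ)/σ), viewed as a function of the predictive mean μ, is strictly monotonically decreasing on ℝ. -/

import Mathlib

open MeasureTheory

/-- The standard normal probability density function. -/
noncomputable def stdNormalPDF (z : ℝ) : ℝ := Real.exp (-z ^ 2 / 2) / Real.sqrt (2 * Real.pi)

/-- The standard normal cumulative distribution function. -/
noncomputable def stdNormalCDF (z : ℝ) : ℝ := ∫ t in Set.Iic z, stdNormalPDF t

/-!
Writing `z = (ρ - μ) / σ`, the expected improvement is `σ · g z` with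
`g z = z Φ(z) + φ(z)` (`stdExpectedImprovement`).
Since `φ' z = -z φ(z)`, the derivative of `g` is `Φ(z) + z φ(z) - z φ(z) = Φ(z) > 0`, so `g`
is strictly increasing, and `μ ↦ (ρ - μ) / σ` is strictly decreasing.
-/

theorem hasDerivAt_setIntegral_Iic {f : ℝ → ℝ} (hf : Integrable f) (hf_cont : Continuous f)
    (x : ℝ) : HasDerivAt (fun y => ∫ t in Set.Iic y, f t) (f x) x := by
  have h_split : ∀ y, ∫ t in Set.Iic y, f t = (∫ t in Set.Iic 0, f t) + ∫ t in (0 : ℝ)..y, f t :=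
    fun y => by
      rw [← intervalIntegral.integral_Iic_sub_Iic hf.integrableOn hf.integrableOn]
      ring
  rw [funext h_split]
  exact (intervalIntegral.integral_hasDerivAt_right hf.intervalIntegrable
    hf_cont.stronglyMeasurable.stronglyMeasurableAtFilter hf_cont.continuousAt).const_add _

theorem stdNormalPDF_pos (z : ℝ) : 0 < stdNormalPDF z := by
  unfold stdNormalPDF
  positivity

theorem continuous_stdNormalPDF : Continuous stdNormalPDF := by
  unfold stdNormalPDF
  fun_prop

theorem integrable_stdNormalPDF : Integrable stdNormalPDF := by
  have h_eq :
      stdNormalPDF = fun z => (Real.sqrt (2 * Real.pi))⁻¹ * Real.exp (-(1 / 2) * z ^ 2) := by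
    funext z
    unfold stdNormalPDF
    ring_nf
  rw [h_eq]
  exact (integrable_exp_neg_mul_sq (by norm_num)).const_mul _

theorem stdNormalCDF_pos (x : ℝ) : 0 < stdNormalCDF x := by
  unfold stdNormalCDF
  rw [setIntegral_pos_iff_support_of_nonneg_ae (Filter.Eventually.of_forall
    fun z => (stdNormalPDF_pos z).le) integrable_stdNormalPDF.integrableOn]
  have h_support : Function.support stdNormalPDF = Set.univ :=
    Set.eq_univ_of_forall fun z => (stdNormalPDF_pos z).ne'
  simp [h_support]

theorem hasDerivAt_stdNormalCDF (x : ℝ) : HasDerivAt stdNormalCDF (stdNormalPDF x) x :=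
  hasDerivAt_setIntegral_Iic integrable_stdNormalPDF continuous_stdNormalPDF x

theorem hasDerivAt_stdNormalPDF (z : ℝ) : HasDerivAt stdNormalPDF (-z * stdNormalPDF z) z := by
  have h_exponent : HasDerivAt (fun z : ℝ => -z ^ 2 / 2) (-z) z :=
    (((hasDerivAt_pow 2 z).neg).div_const 2).congr_deriv (by ring)
  exact (h_exponent.exp.div_const (Real.sqrt (2 * Real.pi))).congr_deriv
    (by unfold stdNormalPDF; ring)

/-- The expected improvement of a standard normal prediction over the target `z`. -/
noncomputable def stdExpectedImprovement (z : ℝ) : ℝ := z * stdNormalCDF z + stdNormalPDF z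

theorem hasDerivAt_stdExpectedImprovement (z : ℝ) :
    HasDerivAt stdExpectedImprovement (stdNormalCDF z) z :=
  (((hasDerivAt_id' z).mul (hasDerivAt_stdNormalCDF z)).add (hasDerivAt_stdNormalPDF z)).congr_deriv
    (by ring)

theorem strictMono_stdExpectedImprovement : StrictMono stdExpectedImprovement :=
  strictMono_of_hasDerivAt_pos hasDerivAt_stdExpectedImprovement stdNormalCDF_pos

/-- The expected improvement `EI(μ) = (ρ - μ)·Φ((ρ - μ)/σ) + σ·φ((ρ - μ)/σ)`, as a function
of the predictive mean μ, is strictly monotonically decreasing on ℝ. -/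
theorem expected_improvement_strictAnti_mu (ρ σ : ℝ) (hσ : 0 < σ) :
    StrictAnti
      (fun μ : ℝ => (ρ - μ) * stdNormalCDF ((ρ - μ) / σ) + σ * stdNormalPDF ((ρ - μ) / σ)) := by
  have h_scale : ∀ μ, (ρ - μ) * stdNormalCDF ((ρ - μ) / σ) + σ * stdNormalPDF ((ρ - μ) / σ)
      = σ * stdExpectedImprovement ((ρ - μ) / σ) := fun μ => by
    unfold stdExpectedImprovement
    field_simp
  intro μ₁ μ₂ hμ
  simp only [h_scale]
  have h_arg : (ρ - μ₂) / σ < (ρ - μ₁) / σ := div_lt_div_of_pos_right (by linarith) hσ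
  exact mul_lt_mul_of_pos_left (strictMono_stdExpectedImprovement h_arg) hσ
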